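/- arXiv:2605.18406 — 2 statements merged into one kernel-verified Lean document; each statement's English description precedes it below -/
import Mathlib

section
/- Let T > 0, q ≥ 1, and let k_1,…,k_q be convolution kernels, i.e. k_p(t,s) = k̄_p(t−s) for measurable k̄_p : (0,T] → ℝ with ∫_0^T |k̄_p(u)| du < ∞. For a word w = p_1⋯p_n ∈ {1,…,q}^n and a permutation σ of {1,…,n}, write σ(w) := p_{σ(1)}⋯p_{σ(n)}. Then for all n ≥ 1, all permutations σ of {1,…,n}, all 0 ≤ s ≤ t ≤ τ ≤ T, all words w ∈ {1,…,q}^n and all letters p ∈ {1,…,q}: 𝒦̇^{wp,τ}_{s,t} = 𝒦̇^{σ(w)p,τ}_{s,t} and 𝒦^{wp,τ}_{s,t} = 𝒦^{σ(w)p,τ}_{s,t}, where wp denotes the word w with the letter p appended. Moreover, on the diagonal τ = t one has, for all 0 ≤ s ≤ t ≤ T, 𝒦̇^{w,t}_{s,t} = 𝒦̇^{σ(w),t}_{s,t} and 𝒦^{w,t}_{s,t} = 𝒦^{σ(w),t}_{s,t}. -/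
open MeasureTheory Matrix

noncomputable section

/-- The simplex `Δ^n_{s,t}` of nondecreasing `n`-tuples with values in `[s,t]`. -/
def volSimplex (n : ℕ) (s t : ℝ) : Set (Fin n → ℝ) :=
  {r | (∀ i, r i ∈ Set.Icc s t) ∧ ∀ i j : Fin n, i ≤ j → r i ≤ r j}

/-- `r_{l+1}`, with the convention that `r_{n+1} = τ`. -/
def nxt {n : ℕ} (r : Fin n → ℝ) (τ : ℝ) (l : Fin n) : ℝ :=
  if h : (l : ℕ) + 1 < n then r ⟨(l : ℕ) + 1, h⟩ else τ

/-- The chain `s = r̃_0, r̃_1 = r_1, …, r̃_n = r_n, r̃_{n+1} = τ`. -/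
def chain {n : ℕ} (s τ : ℝ) (r : Fin n → ℝ) : Fin (n + 2) → ℝ := fun i =>
  if h0 : (i : ℕ) = 0 then s
  else if h : (i : ℕ) ≤ n then r ⟨(i : ℕ) - 1, by omega⟩ else τ

/-- `𝒦^{p₁⋯pₙ,τ}_{s,t}` for the scalar kernels `k`. -/
def scrK {q : ℕ} (k : Fin q → ℝ → ℝ → ℝ) {n : ℕ} (p : Fin n → Fin q)
    (s t τ : ℝ) : ℝ :=
  ∫ r in volSimplex n s t, ∏ l, k (p l) (nxt r τ l) (r l)

/-- `𝒦̇^{p₁⋯p_{n+1},τ}_{s,t}` for a word of length `n + 1`. -/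
def scrKdot {q : ℕ} (k : Fin q → ℝ → ℝ → ℝ) {n : ℕ} (p : Fin (n + 1) → Fin q)
    (s t τ : ℝ) : ℝ :=
  ∫ r in volSimplex n s t,
    ∏ l : Fin (n + 1), k (p l) (chain s τ r l.succ) (chain s τ r l.castSucc)

/-- integral invariance under affine map `u ↦ b + e u` with `|det e| = 1`. -/
lemma integral_comp_affine {m : ℕ} (e : (Fin m → ℝ) ≃ₗ[ℝ] (Fin m → ℝ))
    (hdet : |LinearMap.det (e : (Fin m → ℝ) →ₗ[ℝ] (Fin m → ℝ))| = 1)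
    (b : Fin m → ℝ) (F : (Fin m → ℝ) → ℝ) :
    ∫ u, F (b + e u) = ∫ u, F u := by
  have hd0 : LinearMap.det (e : (Fin m → ℝ) →ₗ[ℝ] (Fin m → ℝ)) ≠ 0 := by
    intro h; rw [h] at hdet; simp at hdet
  have he : MeasurePreserving (⇑e) (volume : Measure (Fin m → ℝ)) volume := by
    refine ⟨e.toContinuousLinearEquiv.continuous.measurable, ?_⟩
    rw [show ⇑e = ⇑(e : (Fin m → ℝ) →ₗ[ℝ] (Fin m → ℝ)) from rfl,
      Real.map_linearMap_volume_pi_eq_smul_volume_pi hd0]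
    rw [abs_inv, hdet]
    simp
  have hb : MeasurePreserving (fun u : Fin m → ℝ => b + u) volume volume :=
    measurePreserving_add_left volume b
  have hcomp : MeasurePreserving (fun u : Fin m → ℝ => b + e u) volume volume :=
    hb.comp he
  have hemb : MeasurableEmbedding (fun u : Fin m → ℝ => b + e u) := by
    have : (fun u : Fin m → ℝ => b + e u) =
        (Homeomorph.addLeft b) ∘ (e.toContinuousLinearEquiv.toHomeomorph) := rfl
    rw [this]
    exact (Homeomorph.addLeft b).measurableEmbedding.comp
      e.toContinuousLinearEquiv.toHomeomorph.measurableEmbedding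
  exact hcomp.integral_comp hemb F

/-- integral invariance under coordinate permutation. -/
lemma integral_comp_perm {m : ℕ} (σ : Equiv.Perm (Fin m)) (F : (Fin m → ℝ) → ℝ) :
    ∫ u : Fin m → ℝ, F (u ∘ σ) = ∫ u, F u := by
  have h := MeasureTheory.volume_measurePreserving_piCongrLeft (fun _ : Fin m => ℝ) σ⁻¹
  have h2 := h.integral_comp
    (MeasurableEquiv.piCongrLeft (fun _ : Fin m => ℝ) σ⁻¹).measurableEmbedding F
  rw [← h2]
  refine integral_congr_ae (Filter.Eventually.of_forall fun u => ?_)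
  have : (MeasurableEquiv.piCongrLeft (fun _ : Fin m => ℝ) σ⁻¹) u = u ∘ σ := by
    ext i
    simp [MeasurableEquiv.piCongrLeft, Equiv.piCongrLeft, Equiv.piCongrLeft',
      Equiv.Perm.inv_def]
  simp only [this]

/-- The "corner" region `{u : 0 ≤ uᵢ, ∑ uᵢ ≤ c}`. -/
def corner (m : ℕ) (c : ℝ) : Set (Fin m → ℝ) :=
  {u | (∀ i, 0 ≤ u i) ∧ ∑ i, u i ≤ c}

/-- The master integral. -/
def II (m : ℕ) (c : ℝ) (f : Fin m → ℝ → ℝ) (g : ℝ → ℝ) : ℝ :=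
  ∫ u : Fin m → ℝ, (corner m c).indicator
    (fun u => (∏ i, f i (u i)) * g (∑ i, u i)) u

lemma corner_comp_perm {m : ℕ} (c : ℝ) (σ : Equiv.Perm (Fin m)) (u : Fin m → ℝ) :
    u ∘ σ ∈ corner m c ↔ u ∈ corner m c := by
  unfold corner
  simp only [Set.mem_setOf_eq, Function.comp_apply]
  rw [Equiv.sum_comp σ u]
  constructor
  · rintro ⟨h1, h2⟩
    exact ⟨fun i => by simpa using h1 (σ.symm i), h2⟩
  · rintro ⟨h1, h2⟩
    exact ⟨fun i => h1 (σ i), h2⟩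

lemma II_perm {m : ℕ} (c : ℝ) (f : Fin m → ℝ → ℝ) (g : ℝ → ℝ) (σ : Equiv.Perm (Fin m)) :
    II m c (fun i => f (σ i)) g = II m c f g := by
  unfold II
  rw [← integral_comp_perm σ⁻¹
    (fun u => (corner m c).indicator (fun u => (∏ i, f i (u i)) * g (∑ i, u i)) u)]
  refine integral_congr_ae (Filter.Eventually.of_forall fun u => ?_)
  simp only []
  by_cases hu : u ∈ corner m c
  · have hu' : u ∘ ⇑σ⁻¹ ∈ corner m c := (corner_comp_perm c σ⁻¹ u).2 hu
    rw [Set.indicator_of_mem hu, Set.indicator_of_mem hu']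
    have hsum : ∑ i, (u ∘ ⇑σ⁻¹) i = ∑ i, u i := Equiv.sum_comp σ⁻¹ u
    have hprod : ∏ i, f i ((u ∘ ⇑σ⁻¹) i) = ∏ i, f (σ i) (u i) := by
      rw [← Equiv.prod_comp σ (fun i => f i ((u ∘ ⇑σ⁻¹) i))]
      simp
    rw [hsum, hprod]
  · have hu' : u ∘ ⇑σ⁻¹ ∉ corner m c := fun h => hu ((corner_comp_perm c σ⁻¹ u).1 h)
    rw [Set.indicator_of_notMem hu, Set.indicator_of_notMem hu']

section refl
variable {m : ℕ}

/-- The linear involution `u ↦ update u j (-∑ u)`. -/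
def reflLin (j : Fin m) : (Fin m → ℝ) →ₗ[ℝ] (Fin m → ℝ) where
  toFun u := Function.update u j (-∑ k, u k)
  map_add' u v := by
    funext i
    rcases eq_or_ne i j with h | h
    · subst h; simp [Finset.sum_add_distrib]; ring
    · simp [Function.update_of_ne h]
  map_smul' a u := by
    funext i
    rcases eq_or_ne i j with h | h
    · subst h; simp [Finset.mul_sum]
    · simp [Function.update_of_ne h]

lemma reflLin_apply (j : Fin m) (u : Fin m → ℝ) :
    reflLin j u = Function.update u j (-∑ k, u k) := rfl

lemma reflLin_sum (j : Fin m) (u : Fin m → ℝ) :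
    ∑ k, reflLin j u k = -u j := by
  show ∑ k, Function.update u j (-∑ k, u k) k = -u j
  rw [Finset.sum_update_of_mem (Finset.mem_univ j)]
  have : ∑ k ∈ Finset.univ \ {j}, u k = (∑ k, u k) - u j := by
    rw [Finset.sum_sdiff_eq_sub (by simp)]
    simp
  rw [this]; ring

lemma reflLin_invol (j : Fin m) (u : Fin m → ℝ) :
    reflLin j (reflLin j u) = u := by
  funext i
  rcases eq_or_ne i j with h | h
  · subst h
    conv_lhs => rw [reflLin_apply, reflLin_sum]
    simp
  · rw [reflLin_apply, Function.update_of_ne h, reflLin_apply, Function.update_of_ne h]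

/-- The reflection as a linear equivalence. -/
def reflEquiv (j : Fin m) : (Fin m → ℝ) ≃ₗ[ℝ] (Fin m → ℝ) :=
  { reflLin j with
    invFun := reflLin j
    left_inv := reflLin_invol j
    right_inv := reflLin_invol j }

lemma reflEquiv_det (j : Fin m) :
    |LinearMap.det ((reflEquiv j : (Fin m → ℝ) ≃ₗ[ℝ] (Fin m → ℝ)) :
      (Fin m → ℝ) →ₗ[ℝ] (Fin m → ℝ))| = 1 := by
  have hcomp : (reflLin j).comp (reflLin j) = LinearMap.id := by
    apply LinearMap.ext
    intro u
    exact reflLin_invol j u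
  have hdet : LinearMap.det (reflLin j) * LinearMap.det (reflLin j) = 1 := by
    rw [← LinearMap.det_comp, hcomp, LinearMap.det_id]
  have : (reflEquiv j : (Fin m → ℝ) →ₗ[ℝ] (Fin m → ℝ)) = reflLin j := rfl
  rw [this]
  rcases mul_self_eq_one_iff.1 hdet with h | h <;> rw [h] <;> norm_num

end refl

lemma II_swap {m : ℕ} (c : ℝ) (f : Fin m → ℝ → ℝ) (h : ℝ → ℝ) (j : Fin m) :
    II m c (Function.update f j h) (fun x => f j (c - x)) =
      II m c f (fun x => h (c - x)) := by
  unfold II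
  rw [← integral_comp_affine (reflEquiv j) (reflEquiv_det j)
    (fun i => if i = j then c else 0)
    (fun u => (corner m c).indicator
      (fun u => (∏ i, f i (u i)) * (fun x => h (c - x)) (∑ i, u i)) u)]
  refine integral_congr_ae (Filter.Eventually.of_forall fun u => ?_)
  simp only []
  set R : Fin m → ℝ := Function.update u j (c - ∑ k, u k) with hRdef
  have hR : (fun i => if i = j then c else 0) + (reflEquiv j) u = R := by
    funext i
    rcases eq_or_ne i j with hij | hij
    · subst hij
      show _ + reflLin i u i = R i
      rw [reflLin_apply]
      simp [R]
      ring
    · show _ + reflLin j u i = R i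
      rw [reflLin_apply, Function.update_of_ne hij]
      simp [R, Function.update_of_ne hij, hij]
  rw [hR]
  have hRsum : ∑ k, R k = c - u j := by
    rw [hRdef, Finset.sum_update_of_mem (Finset.mem_univ j)]
    have : ∑ k ∈ Finset.univ \ {j}, u k = (∑ k, u k) - u j := by
      rw [Finset.sum_sdiff_eq_sub (by simp)]; simp
    rw [this]; ring
  have hmem : R ∈ corner m c ↔ u ∈ corner m c := by
    unfold corner
    simp only [Set.mem_setOf_eq, hRsum]
    constructor
    · rintro ⟨h1, h2⟩
      refine ⟨fun i => ?_, ?_⟩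
      · rcases eq_or_ne i j with hij | hij
        · subst hij; linarith
        · have := h1 i; rwa [hRdef, Function.update_of_ne hij] at this
      · have := h1 j; rw [hRdef, Function.update_self] at this; linarith
    · rintro ⟨h1, h2⟩
      refine ⟨fun i => ?_, ?_⟩
      · rcases eq_or_ne i j with hij | hij
        · subst hij; rw [hRdef, Function.update_self]; linarith
        · rw [hRdef, Function.update_of_ne hij]; exact h1 i
      · have := h1 j; linarith
  by_cases hu : u ∈ corner m c
  · rw [Set.indicator_of_mem (hmem.2 hu), Set.indicator_of_mem hu]
    have hprod1 : (fun i => f i (R i)) =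
        Function.update (fun i => f i (u i)) j (f j (c - ∑ k, u k)) := by
      funext i
      rcases eq_or_ne i j with hij | hij
      · subst hij; rw [hRdef]; simp
      · rw [hRdef, Function.update_of_ne hij, Function.update_of_ne hij]
    have hprod2 : (fun i => Function.update f j h i (u i)) =
        Function.update (fun i => f i (u i)) j (h (u j)) := by
      funext i
      rcases eq_or_ne i j with hij | hij
      · subst hij; simp
      · rw [Function.update_of_ne hij, Function.update_of_ne hij]
    symm
    calc (∏ i, f i (R i)) * h (c - ∑ i, R i)
        = (∏ i, Function.update (fun i => f i (u i)) j (f j (c - ∑ k, u k)) i) * h (u j) := by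
          rw [← hprod1, hRsum]; ring_nf
      _ = (f j (c - ∑ k, u k) * ∏ i ∈ Finset.univ \ {j}, f i (u i)) * h (u j) := by
          rw [Finset.prod_update_of_mem (Finset.mem_univ j)]
      _ = (h (u j) * ∏ i ∈ Finset.univ \ {j}, f i (u i)) * f j (c - ∑ k, u k) := by ring
      _ = (∏ i, Function.update (fun i => f i (u i)) j (h (u j)) i) * f j (c - ∑ k, u k) := by
          rw [Finset.prod_update_of_mem (Finset.mem_univ j)]
      _ = (∏ i, Function.update f j h i (u i)) * f j (c - ∑ i, u i) := by rw [← hprod2]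
  · rw [Set.indicator_of_notMem (fun hh => hu (hmem.1 hh)),
      Set.indicator_of_notMem hu]

section tri
variable {m : ℕ}

/-- `u` padded by zero to a function on `ℕ`. -/
def padu (m : ℕ) (u : Fin m → ℝ) : ℕ → ℝ := fun i => if h : i < m then u ⟨i, h⟩ else 0

lemma padu_coe (u : Fin m → ℝ) (i : Fin m) : padu m u (i : ℕ) = u i := by
  simp [padu, i.isLt]

lemma padu_nonneg (u : Fin m → ℝ) (hu : ∀ i, 0 ≤ u i) (i : ℕ) : 0 ≤ padu m u i := by
  unfold padu; split <;> simp [hu]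

/-- Lower triangular matrix of ones. -/
def lowM (m : ℕ) : Matrix (Fin m) (Fin m) ℝ := fun l i => if (i : ℕ) ≤ (l : ℕ) then 1 else 0

lemma lowM_det : (lowM m).det = 1 := by
  rw [Matrix.det_of_lowerTriangular (lowM m)]
  · simp [lowM]
  · intro i j hij
    simp only [OrderDual.toDual_lt_toDual] at hij
    simp [lowM, Nat.not_le.2 (Fin.lt_iff_val_lt_val.1 hij)]

instance : Invertible (lowM m) := Matrix.invertibleOfIsUnitDet _ (by rw [lowM_det]; simp)

/-- The triangular linear equivalence `u ↦ partial sums`. -/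
def triEquiv (m : ℕ) : (Fin m → ℝ) ≃ₗ[ℝ] (Fin m → ℝ) :=
  Matrix.toLinearEquiv' (lowM m) inferInstance

lemma triEquiv_apply (u : Fin m → ℝ) (l : Fin m) :
    triEquiv m u l = ∑ i ∈ Finset.range ((l : ℕ) + 1), padu m u i := by
  have h1 : triEquiv m u = Matrix.toLin' (lowM m) u := rfl
  rw [h1, Matrix.toLin'_apply]
  show ∑ i, lowM m l i * u i = _
  have h2 : ∀ i : Fin m, lowM m l i * u i = if (i : ℕ) ≤ (l : ℕ) then u i else 0 := by
    intro i; unfold lowM; split <;> simp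
  rw [Finset.sum_congr rfl fun i _ => h2 i]
  have h3 : ∑ i : Fin m, (if (i : ℕ) ≤ (l : ℕ) then u i else 0) =
      ∑ i ∈ Finset.range m, (if i ≤ (l : ℕ) then padu m u i else 0) := by
    rw [← Fin.sum_univ_eq_sum_range (fun i => if i ≤ (l : ℕ) then padu m u i else 0) m]
    refine Finset.sum_congr rfl fun i _ => ?_
    rw [padu_coe]
  rw [h3]
  rw [← Finset.sum_subset (Finset.range_subset_range.2 (by omega : (l : ℕ) + 1 ≤ m))
    (fun x _ hx => if_neg (by simp only [Finset.mem_range] at hx; omega))]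
  exact Finset.sum_congr rfl fun i hi =>
    if_pos (by simp only [Finset.mem_range] at hi; omega)

lemma triEquiv_det :
    |LinearMap.det ((triEquiv m : (Fin m → ℝ) ≃ₗ[ℝ] (Fin m → ℝ)) :
      (Fin m → ℝ) →ₗ[ℝ] (Fin m → ℝ))| = 1 := by
  have h1 : ((triEquiv m : (Fin m → ℝ) ≃ₗ[ℝ] (Fin m → ℝ)) :
      (Fin m → ℝ) →ₗ[ℝ] (Fin m → ℝ)) = Matrix.toLin' (lowM m) := rfl
  rw [h1, LinearMap.det_toLin', lowM_det]
  norm_num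

/-- The affine map from increments to simplex points. -/
def Phi (m : ℕ) (s : ℝ) (u : Fin m → ℝ) : Fin m → ℝ := fun l => s + triEquiv m u l

lemma Phi_apply (s : ℝ) (u : Fin m → ℝ) (l : Fin m) :
    Phi m s u l = s + ∑ i ∈ Finset.range ((l : ℕ) + 1), padu m u i := by
  rw [Phi, triEquiv_apply]

lemma sum_univ_padu (u : Fin m → ℝ) : ∑ i, u i = ∑ i ∈ Finset.range m, padu m u i := by
  rw [← Fin.sum_univ_eq_sum_range (padu m u) m]
  exact Finset.sum_congr rfl fun i _ => (padu_coe u i).symm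

end tri
lemma measurableSet_volSimplex (m : ℕ) (s t : ℝ) :
    MeasurableSet (volSimplex m s t) := by
  have : volSimplex m s t =
      (⋂ i, (fun r : Fin m → ℝ => r i) ⁻¹' Set.Icc s t) ∩
      ⋂ (i) (j), {r : Fin m → ℝ | i ≤ j → r i ≤ r j} := by
    ext r
    simp [volSimplex, Set.mem_iInter]
  rw [this]
  refine MeasurableSet.inter (MeasurableSet.iInter fun i =>
    (measurable_pi_apply i) measurableSet_Icc) ?_
  refine MeasurableSet.iInter fun i => MeasurableSet.iInter fun j => ?_
  by_cases hij : i ≤ j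
  · have : {r : Fin m → ℝ | i ≤ j → r i ≤ r j} = {r | r i ≤ r j} := by
      ext r; simp [hij]
    rw [this]
    exact measurableSet_le (measurable_pi_apply i) (measurable_pi_apply j)
  · have : {r : Fin m → ℝ | i ≤ j → r i ≤ r j} = Set.univ := by
      ext r; simp [hij]
    rw [this]
    exact MeasurableSet.univ

lemma Phi_mem_volSimplex {m : ℕ} {s t : ℝ} (hst : s ≤ t) (u : Fin m → ℝ) :
    Phi m s u ∈ volSimplex m s t ↔ u ∈ corner m (t - s) := by
  constructor
  · rintro ⟨hIcc, hmono⟩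
    constructor
    · intro i
      rcases Nat.eq_zero_or_eq_succ_pred (i : ℕ) with h0 | hsucc
      · have hi : i = ⟨0, by omega⟩ := Fin.ext h0
        have := (hIcc i).1
        rw [Phi_apply] at this
        rw [h0] at this
        simp only [zero_add, Finset.range_one, Finset.sum_singleton] at this
        have hm0 : 0 < m := by have := i.isLt; omega
        have hp : padu m u 0 = u ⟨0, by omega⟩ := by simp [padu, hm0]
        rw [hp] at this
        rw [hi]; linarith
      · set j := (i : ℕ) - 1 with hj
        have hij : (i : ℕ) = j + 1 := by omega
        have hjm : j < m := by omega
        have hle : (⟨j, hjm⟩ : Fin m) ≤ i := by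
          simp only [Fin.le_def]
          show j ≤ (i : ℕ)
          omega
        have := hmono ⟨j, hjm⟩ i hle
        rw [Phi_apply, Phi_apply, hij] at this
        simp only [Finset.sum_range_succ] at this
        have hp : padu m u (j + 1) = u i := by rw [← hij, padu_coe]
        rw [hp] at this
        linarith [this]
    · rcases Nat.eq_zero_or_pos m with hm | hm
      · subst hm
        simp only [Finset.univ_eq_empty, Finset.sum_empty]
        linarith
      · have hlast : (⟨m - 1, by omega⟩ : Fin m) ∈ Finset.univ := Finset.mem_univ _
        have := (hIcc ⟨m - 1, by omega⟩).2
        rw [Phi_apply] at this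
        have hmm : (m - 1) + 1 = m := by omega
        rw [show ((⟨m - 1, by omega⟩ : Fin m) : ℕ) = m - 1 from rfl, hmm] at this
        rw [sum_univ_padu]
        linarith
  · rintro ⟨hpos, hsum⟩
    have hpad : ∀ i, 0 ≤ padu m u i := padu_nonneg u hpos
    have hbound : ∀ l : Fin m, ∑ i ∈ Finset.range ((l : ℕ) + 1), padu m u i ≤ t - s := by
      intro l
      calc ∑ i ∈ Finset.range ((l : ℕ) + 1), padu m u i
          ≤ ∑ i ∈ Finset.range m, padu m u i :=
            Finset.sum_le_sum_of_subset_of_nonneg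
              (Finset.range_subset_range.2 (by omega)) (fun i _ _ => hpad i)
        _ = ∑ i, u i := (sum_univ_padu u).symm
        _ ≤ t - s := hsum
    refine ⟨fun l => ?_, fun i j hij => ?_⟩
    · rw [Phi_apply]
      constructor
      · have : 0 ≤ ∑ i ∈ Finset.range ((l : ℕ) + 1), padu m u i :=
          Finset.sum_nonneg fun i _ => hpad i
        linarith
      · linarith [hbound l]
    · rw [Phi_apply, Phi_apply]
      have : ∑ x ∈ Finset.range ((i : ℕ) + 1), padu m u x ≤
          ∑ x ∈ Finset.range ((j : ℕ) + 1), padu m u x :=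
        Finset.sum_le_sum_of_subset_of_nonneg
          (Finset.range_subset_range.2 (by omega)) (fun x _ _ => hpad x)
      linarith

/-- Master reduction: a set integral over the simplex as an indicator integral over
the corner in increment coordinates. -/
lemma setIntegral_simplex {m : ℕ} {s t : ℝ} (hst : s ≤ t) (G : (Fin m → ℝ) → ℝ) :
    ∫ r in volSimplex m s t, G r =
      ∫ u, (corner m (t - s)).indicator (fun u => G (Phi m s u)) u := by
  rw [← integral_indicator (measurableSet_volSimplex m s t)]
  rw [← integral_comp_affine (triEquiv m) triEquiv_det (fun _ => s)
    (fun r => (volSimplex m s t).indicator G r)]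
  refine integral_congr_ae (Filter.Eventually.of_forall fun u => ?_)
  have hPhi : (fun _ : Fin m => s) + (triEquiv m) u = Phi m s u := rfl
  simp only [hPhi]
  by_cases hu : u ∈ corner m (t - s)
  · rw [Set.indicator_of_mem ((Phi_mem_volSimplex hst u).2 hu), Set.indicator_of_mem hu]
  · rw [Set.indicator_of_notMem (fun hh => hu ((Phi_mem_volSimplex hst u).1 hh)),
      Set.indicator_of_notMem hu]

section red
variable {m : ℕ} {s τ : ℝ}

lemma chain_zero {n : ℕ} (r : Fin n → ℝ) (i : Fin (n + 2)) (h : (i : ℕ) = 0) :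
    chain s τ r i = s := by simp [chain, h]

lemma chain_mid {n : ℕ} (r : Fin n → ℝ) (i : Fin (n + 2)) (h1 : (i : ℕ) ≠ 0)
    (h2 : (i : ℕ) ≤ n) : chain s τ r i = r ⟨(i : ℕ) - 1, by omega⟩ := by
  simp [chain, h1, h2]

lemma chain_top {n : ℕ} (r : Fin n → ℝ) (i : Fin (n + 2)) (h : n < (i : ℕ)) :
    chain s τ r i = τ := by
  have h1 : (i : ℕ) ≠ 0 := by omega
  have h2 : ¬ (i : ℕ) ≤ n := by omega
  simp [chain, h1, h2]

lemma Phi_diff (u : Fin m → ℝ) (a b : Fin m) (hab : (b : ℕ) = (a : ℕ) + 1) :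
    Phi m s u b - Phi m s u a = u b := by
  rw [Phi_apply, Phi_apply, hab, Finset.sum_range_succ, ← hab, padu_coe]
  ring

lemma Phi_zeroth (u : Fin m → ℝ) (a : Fin m) (ha : (a : ℕ) = 0) :
    Phi m s u a - s = u a := by
  rw [Phi_apply, ha, zero_add, Finset.range_one, Finset.sum_singleton, ← ha, padu_coe]
  ring

lemma Phi_top (u : Fin m → ℝ) (hm : 0 < m) :
    Phi m s u ⟨m - 1, by omega⟩ = s + ∑ i, u i := by
  rw [Phi_apply]
  have h1 : ((⟨m - 1, by omega⟩ : Fin m) : ℕ) = m - 1 := rfl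
  rw [h1, show m - 1 + 1 = m by omega, sum_univ_padu]

lemma prod_kdot {q n : ℕ} (kb : Fin q → ℝ → ℝ) (k : Fin q → ℝ → ℝ → ℝ)
    (hk : ∀ p a c, k p a c = kb p (a - c)) (p : Fin (n + 1) → Fin q) (u : Fin n → ℝ) :
    (∏ l : Fin (n + 1), k (p l) (chain s τ (Phi n s u) l.succ)
      (chain s τ (Phi n s u) l.castSucc)) =
    (∏ l : Fin n, kb (p l.castSucc) (u l)) * kb (p (Fin.last n)) (τ - s - ∑ i, u i) := by
  rw [Fin.prod_univ_castSucc]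
  congr 1
  · refine Finset.prod_congr rfl fun l _ => ?_
    rw [hk]
    congr 1
    have hsucc : ((l.castSucc.succ : Fin (n + 2)) : ℕ) = (l : ℕ) + 1 := by simp
    have hcast : ((l.castSucc.castSucc : Fin (n + 2)) : ℕ) = (l : ℕ) := by simp
    have h1 : chain s τ (Phi n s u) l.castSucc.succ = Phi n s u ⟨(l : ℕ), l.isLt⟩ := by
      rw [chain_mid _ _ (by omega) (by omega : ((l.castSucc.succ : Fin (n+2)) : ℕ) ≤ n)]
      congr 1
    rw [h1]
    rcases Nat.eq_zero_or_pos (l : ℕ) with h0 | hpos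
    · rw [chain_zero _ _ (by omega : ((l.castSucc.castSucc : Fin (n+2)) : ℕ) = 0)]
      have := Phi_zeroth (s := s) u ⟨(l : ℕ), l.isLt⟩ h0
      simpa using this
    · rw [chain_mid _ _ (by omega) (by omega : ((l.castSucc.castSucc : Fin (n+2)) : ℕ) ≤ n)]
      have := Phi_diff (s := s) u ⟨(l : ℕ) - 1, by omega⟩ ⟨(l : ℕ), l.isLt⟩ (by simp; omega)
      simp only [hcast]
      convert this using 3
  · rw [hk]
    congr 1
    have h1 : chain s τ (Phi n s u) (Fin.last n).succ = τ :=
      chain_top _ _ (by simp)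
    rw [h1]
    rcases Nat.eq_zero_or_pos n with h0 | hpos
    · subst h0
      rw [chain_zero _ _ (by simp)]
      simp
    · have hv : (((Fin.last n).castSucc : Fin (n + 2)) : ℕ) = n := by simp
      rw [chain_mid _ _ (by omega) (by omega)]
      have := Phi_top (s := s) u hpos
      have h2 : ((⟨((Fin.last n).castSucc : ℕ) - 1, by omega⟩ : Fin n)) =
          (⟨n - 1, by omega⟩ : Fin n) := by ext; simp
      rw [h2, this]
      ring

end red

section red2
variable {m : ℕ} {s τ : ℝ}

lemma nxt_lt {n : ℕ} (r : Fin n → ℝ) (l : Fin n) (h : (l : ℕ) + 1 < n) :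
    nxt r τ l = r ⟨(l : ℕ) + 1, h⟩ := dif_pos h

lemma nxt_ge {n : ℕ} (r : Fin n → ℝ) (l : Fin n) (h : ¬ (l : ℕ) + 1 < n) :
    nxt r τ l = τ := dif_neg h

lemma prod_kK {q n : ℕ} (kb : Fin q → ℝ → ℝ) (k : Fin q → ℝ → ℝ → ℝ)
    (hk : ∀ p a c, k p a c = kb p (a - c)) (p : Fin (n + 1) → Fin q)
    (u : Fin (n + 1) → ℝ) :
    (∏ l : Fin (n + 1), k (p l) (nxt (Phi (n + 1) s u) τ l) (Phi (n + 1) s u l)) =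
    (∏ i : Fin (n + 1),
        (Fin.cases (motive := fun _ => ℝ → ℝ) (fun _ => (1:ℝ)) (fun j => kb (p j.castSucc)) i) (u i)) *
      kb (p (Fin.last n)) (τ - s - ∑ i, u i) := by
  rw [Fin.prod_univ_castSucc, Fin.prod_univ_succ]
  simp only [Fin.cases_zero, Fin.cases_succ, one_mul]
  congr 1
  · refine Finset.prod_congr rfl fun l _ => ?_
    rw [hk]
    have hlt : ((l.castSucc : Fin (n + 1)) : ℕ) + 1 < n + 1 := by
      simp only [Fin.coe_castSucc]; omega
    rw [nxt_lt _ _ hlt]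
    congr 1
    have := Phi_diff (s := s) u l.castSucc ⟨(l.castSucc : ℕ) + 1, hlt⟩ (by simp)
    have h2 : (⟨((l.castSucc : Fin (n+1)) : ℕ) + 1, hlt⟩ : Fin (n + 1)) = l.succ := by
      ext; simp
    rw [h2] at this
    exact this
  · rw [hk]
    congr 1
    rw [nxt_ge _ _ (by simp)]
    have := Phi_top (s := s) u (by omega : 0 < n + 1)
    have h2 : (⟨n + 1 - 1, by omega⟩ : Fin (n + 1)) = Fin.last n := by ext; simp
    rw [h2] at this
    rw [this]
    ring

lemma scrKdot_eq_II {q n : ℕ} (kb : Fin q → ℝ → ℝ) (k : Fin q → ℝ → ℝ → ℝ)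
    (hk : ∀ p a c, k p a c = kb p (a - c)) (p : Fin (n + 1) → Fin q) {s t τ : ℝ}
    (hst : s ≤ t) :
    scrKdot k p s t τ = II n (t - s) (fun l => kb (p l.castSucc))
      (fun x => kb (p (Fin.last n)) (τ - s - x)) := by
  rw [scrKdot, setIntegral_simplex hst, II]
  congr 1
  funext u
  congr 1
  funext v
  exact prod_kdot kb k hk p v

lemma scrK_eq_II {q n : ℕ} (kb : Fin q → ℝ → ℝ) (k : Fin q → ℝ → ℝ → ℝ)
    (hk : ∀ p a c, k p a c = kb p (a - c)) (p : Fin (n + 1) → Fin q) {s t τ : ℝ}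
    (hst : s ≤ t) :
    scrK k p s t τ = II (n + 1) (t - s)
      (Fin.cases (motive := fun _ => ℝ → ℝ) (fun _ => (1:ℝ)) (fun j => kb (p j.castSucc)))
      (fun x => kb (p (Fin.last n)) (τ - s - x)) := by
  rw [scrK, setIntegral_simplex hst, II]
  congr 1
  funext u
  congr 1
  funext v
  exact prod_kK kb k hk p v

end red2

/-- extend a permutation of `Fin n` to `Fin (n+1)` fixing `0`. -/
def permSucc {n : ℕ} (σ : Equiv.Perm (Fin n)) : Equiv.Perm (Fin (n + 1)) where
  toFun := Fin.cases 0 (fun j => (σ j).succ)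
  invFun := Fin.cases 0 (fun j => (σ⁻¹ j).succ)
  left_inv i := by
    induction i using Fin.cases with
    | zero => simp
    | succ j => simp
  right_inv i := by
    induction i using Fin.cases with
    | zero => simp
    | succ j => simp

@[simp] lemma permSucc_zero {n : ℕ} (σ : Equiv.Perm (Fin n)) : permSucc σ 0 = 0 := rfl

@[simp] lemma permSucc_succ {n : ℕ} (σ : Equiv.Perm (Fin n)) (j : Fin n) :
    permSucc σ j.succ = (σ j).succ := by
  show Fin.cases 0 (fun j => (σ j).succ) j.succ = (σ j).succ
  simp

lemma swap_castSucc {n : ℕ} (a b l : Fin n) :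
    Equiv.swap a.castSucc b.castSucc l.castSucc = (Equiv.swap a b l).castSucc := by
  rcases eq_or_ne l a with h | h
  · subst h; simp
  · rcases eq_or_ne l b with h2 | h2
    · subst h2; simp
    · rw [Equiv.swap_apply_of_ne_of_ne (by simpa [Fin.castSucc_inj] using h)
        (by simpa [Fin.castSucc_inj] using h2),
        Equiv.swap_apply_of_ne_of_ne h h2]

section diag
variable {q : ℕ} (kb : Fin q → ℝ → ℝ) {n : ℕ} (c : ℝ)

/-- the `II`-value of `scrKdot` on the diagonal, as a function of the word. -/
def IIdot (w : Fin (n + 1) → Fin q) : ℝ :=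
  II n c (fun l => kb (w l.castSucc)) (fun x => kb (w (Fin.last n)) (c - x))

/-- the `II`-value of `scrK` on the diagonal, as a function of the word. -/
def IIK (w : Fin (n + 1) → Fin q) : ℝ :=
  II (n + 1) c (Fin.cases (motive := fun _ => ℝ → ℝ) (fun _ => (1:ℝ))
    (fun j => kb (w j.castSucc))) (fun x => kb (w (Fin.last n)) (c - x))

lemma cases_comp_permSucc (σ : Equiv.Perm (Fin n)) (F : Fin n → ℝ → ℝ) (o : ℝ → ℝ) :
    (fun i : Fin (n + 1) =>
      Fin.cases (motive := fun _ => ℝ → ℝ) o F (permSucc σ i)) =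
    Fin.cases (motive := fun _ => ℝ → ℝ) o (fun j => F (σ j)) := by
  funext i
  induction i using Fin.cases with
  | zero => simp
  | succ j => simp

lemma II_perm_cases (σ : Equiv.Perm (Fin n)) (F : Fin n → ℝ → ℝ) (o g : ℝ → ℝ) :
    II (n + 1) c (Fin.cases (motive := fun _ => ℝ → ℝ) o (fun j => F (σ j))) g =
      II (n + 1) c (Fin.cases (motive := fun _ => ℝ → ℝ) o F) g := by
  rw [← cases_comp_permSucc σ F o]
  exact II_perm c (Fin.cases (motive := fun _ => ℝ → ℝ) o F) g (permSucc σ)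

lemma IIdot_swap_last (w : Fin (n + 1) → Fin q) (a : Fin (n + 1))
    (ha : a ≠ Fin.last n) :
    IIdot kb c (w ∘ Equiv.swap a (Fin.last n)) = IIdot kb c w := by
  set j := a.castPred ha with hjdef
  have hj : j.castSucc = a := Fin.castSucc_castPred a ha
  set f : Fin n → ℝ → ℝ := fun l => kb (w l.castSucc) with hfdef
  have hf' : (fun l : Fin n => kb ((w ∘ Equiv.swap a (Fin.last n)) l.castSucc)) =
      Function.update f j (kb (w (Fin.last n))) := by
    funext l
    rcases eq_or_ne l j with h | h
    · subst h
      simp [hj]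
    · have hne : l.castSucc ≠ a := by
        rw [← hj]; simpa [Fin.castSucc_inj] using h
      have hne2 : l.castSucc ≠ Fin.last n := (Fin.castSucc_lt_last l).ne
      simp [Function.comp, Equiv.swap_apply_of_ne_of_ne hne hne2,
        Function.update_of_ne h, f]
  have hg' : (w ∘ Equiv.swap a (Fin.last n)) (Fin.last n) = w a := by simp
  have hfj : f j = kb (w a) := by rw [hfdef]; simp [hj]
  show II n c _ _ = II n c _ _
  rw [hf', hg', ← hfj]
  exact II_swap c f (kb (w (Fin.last n))) j

lemma IIdot_swap (w : Fin (n + 1) → Fin q) (a b : Fin (n + 1)) :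
    IIdot kb c (w ∘ Equiv.swap a b) = IIdot kb c w := by
  rcases eq_or_ne a b with hab | hab
  · subst hab; simp [Equiv.swap_self]
  by_cases ha : a = Fin.last n
  · subst ha
    rw [Equiv.swap_comm]
    exact IIdot_swap_last kb c w b (Ne.symm hab)
  · by_cases hb : b = Fin.last n
    · subst hb
      exact IIdot_swap_last kb c w a ha
    · -- both differ from `last`
      set ja := a.castPred ha with hjadef
      set jb := b.castPred hb with hjbdef
      have hja : ja.castSucc = a := Fin.castSucc_castPred a ha
      have hjb : jb.castSucc = b := Fin.castSucc_castPred b hb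
      have hlast : (w ∘ Equiv.swap a b) (Fin.last n) = w (Fin.last n) := by
        rw [Function.comp_apply, Equiv.swap_apply_of_ne_of_ne (Ne.symm ha) (Ne.symm hb)]
      have hf' : (fun l : Fin n => kb ((w ∘ Equiv.swap a b) l.castSucc)) =
          fun l => (fun l' : Fin n => kb (w l'.castSucc)) (Equiv.swap ja jb l) := by
        funext l
        simp only [Function.comp_apply]
        rw [← hja, ← hjb, swap_castSucc]
      show II n c _ _ = II n c _ _
      rw [hf', hlast]
      exact II_perm c (fun l : Fin n => kb (w l.castSucc)) _ (Equiv.swap ja jb)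

lemma IIdot_perm (σ : Equiv.Perm (Fin (n + 1))) :
    ∀ w : Fin (n + 1) → Fin q, IIdot kb c (w ∘ σ) = IIdot kb c w := by
  refine Equiv.Perm.swap_induction_on σ (fun w => rfl) ?_
  intro f x y hxy ih w
  have h1 : w ∘ ⇑(Equiv.swap x y * f) = (w ∘ Equiv.swap x y) ∘ f := rfl
  rw [h1, ih (w ∘ Equiv.swap x y), IIdot_swap]

lemma IIK_swap_last (w : Fin (n + 1) → Fin q) (a : Fin (n + 1))
    (ha : a ≠ Fin.last n) :
    IIK kb c (w ∘ Equiv.swap a (Fin.last n)) = IIK kb c w := by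
  set j := a.castPred ha with hjdef
  have hj : j.castSucc = a := Fin.castSucc_castPred a ha
  set f : Fin (n + 1) → ℝ → ℝ := Fin.cases (motive := fun _ => ℝ → ℝ) (fun _ => (1:ℝ))
    (fun l => kb (w l.castSucc)) with hfdef
  have hf' : (Fin.cases (motive := fun _ => ℝ → ℝ) (fun _ => (1:ℝ))
      (fun l : Fin n => kb ((w ∘ Equiv.swap a (Fin.last n)) l.castSucc))) =
      Function.update f j.succ (kb (w (Fin.last n))) := by
    funext i
    induction i using Fin.cases with
    | zero =>
      rw [Function.update_of_ne (Fin.succ_ne_zero j).symm]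
      simp [hfdef]
    | succ l =>
      rcases eq_or_ne l j with h | h
      · subst h
        simp [hj]
      · have hne : l.castSucc ≠ a := by
          rw [← hj]; simpa [Fin.castSucc_inj] using h
        have hne2 : l.castSucc ≠ Fin.last n := (Fin.castSucc_lt_last l).ne
        have hsne : l.succ ≠ j.succ := by simpa [Fin.succ_inj] using h
        simp [Function.comp, Equiv.swap_apply_of_ne_of_ne hne hne2,
          Function.update_of_ne hsne, f]
  have hg' : (w ∘ Equiv.swap a (Fin.last n)) (Fin.last n) = w a := by simp
  have hfj : f j.succ = kb (w a) := by rw [hfdef]; simp [hj]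
  show II (n + 1) c _ _ = II (n + 1) c _ _
  rw [hf', hg', ← hfj]
  exact II_swap c f (kb (w (Fin.last n))) j.succ

lemma IIK_swap (w : Fin (n + 1) → Fin q) (a b : Fin (n + 1)) :
    IIK kb c (w ∘ Equiv.swap a b) = IIK kb c w := by
  rcases eq_or_ne a b with hab | hab
  · subst hab; simp [Equiv.swap_self]
  by_cases ha : a = Fin.last n
  · subst ha
    rw [Equiv.swap_comm]
    exact IIK_swap_last kb c w b (Ne.symm hab)
  · by_cases hb : b = Fin.last n
    · subst hb
      exact IIK_swap_last kb c w a ha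
    · set ja := a.castPred ha with hjadef
      set jb := b.castPred hb with hjbdef
      have hja : ja.castSucc = a := Fin.castSucc_castPred a ha
      have hjb : jb.castSucc = b := Fin.castSucc_castPred b hb
      have hlast : (w ∘ Equiv.swap a b) (Fin.last n) = w (Fin.last n) := by
        rw [Function.comp_apply, Equiv.swap_apply_of_ne_of_ne (Ne.symm ha) (Ne.symm hb)]
      have hf' : (fun l : Fin n => kb ((w ∘ Equiv.swap a b) l.castSucc)) =
          fun l => (fun l' : Fin n => kb (w l'.castSucc)) (Equiv.swap ja jb l) := by
        funext l
        simp only [Function.comp_apply]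
        rw [← hja, ← hjb, swap_castSucc]
      show II (n + 1) c _ _ = II (n + 1) c _ _
      rw [hlast]
      have := II_perm_cases (c := c) (Equiv.swap ja jb)
        (fun l : Fin n => kb (w l.castSucc)) (fun _ => (1:ℝ))
        (fun x => kb (w (Fin.last n)) (c - x))
      rw [← this]
      congr 1
      funext i
      induction i using Fin.cases with
      | zero => simp
      | succ l =>
        simp only [Fin.cases_succ]
        rw [congrFun hf' l]

lemma IIK_perm (σ : Equiv.Perm (Fin (n + 1))) :
    ∀ w : Fin (n + 1) → Fin q, IIK kb c (w ∘ σ) = IIK kb c w := by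
  refine Equiv.Perm.swap_induction_on σ (fun w => rfl) ?_
  intro f x y hxy ih w
  have h1 : w ∘ ⇑(Equiv.swap x y * f) = (w ∘ Equiv.swap x y) ∘ f := rfl
  rw [h1, ih (w ∘ Equiv.swap x y), IIK_swap]

end diag

/-- Permutation symmetry of the weights `𝒦̇` and `𝒦` for convolution
kernels: the first `n` letters of `wp` may be permuted, and on the diagonal `τ = t` all
letters may be permuted. -/
theorem stmt4 {T : ℝ} (hT : 0 < T) {q : ℕ} (hq : 1 ≤ q)
    (kb : Fin q → ℝ → ℝ)
    (hkb_meas : ∀ p, Measurable (kb p))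
    (hkb_int : ∀ p, IntegrableOn (kb p) (Set.Ioc (0:ℝ) T))
    (k : Fin q → ℝ → ℝ → ℝ) (hk : ∀ p a c, k p a c = kb p (a - c)) :
    (∀ (n : ℕ), 1 ≤ n → ∀ (σ : Equiv.Perm (Fin n)) (w : Fin n → Fin q) (p : Fin q)
        (s t τ : ℝ), 0 ≤ s → s ≤ t → t ≤ τ → τ ≤ T →
        scrKdot k (Fin.snoc w p) s t τ = scrKdot k (Fin.snoc (w ∘ σ) p) s t τ ∧
        scrK k (Fin.snoc w p) s t τ = scrK k (Fin.snoc (w ∘ σ) p) s t τ) ∧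
    (∀ (n : ℕ) (σ : Equiv.Perm (Fin (n + 1))) (w : Fin (n + 1) → Fin q)
        (s t : ℝ), 0 ≤ s → s ≤ t → t ≤ T →
        scrKdot k w s t t = scrKdot k (w ∘ σ) s t t ∧
        scrK k w s t t = scrK k (w ∘ σ) s t t) := by
  constructor
  · intro n hn σ w p s t τ h0s hst htτ hτT
    constructor
    · rw [scrKdot_eq_II kb k hk (Fin.snoc w p) hst,
        scrKdot_eq_II kb k hk (Fin.snoc (w ∘ σ) p) hst]
      simp only [Fin.snoc_castSucc, Fin.snoc_last, Function.comp_apply]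
      exact (II_perm (t - s) (fun l => kb (w l)) _ σ).symm
    · rw [scrK_eq_II kb k hk (Fin.snoc w p) hst,
        scrK_eq_II kb k hk (Fin.snoc (w ∘ σ) p) hst]
      simp only [Fin.snoc_castSucc, Fin.snoc_last, Function.comp_apply]
      exact (II_perm_cases (t - s) σ (fun j => kb (w j)) (fun _ => (1:ℝ)) _).symm
  · intro n σ w s t h0s hst htT
    constructor
    · rw [scrKdot_eq_II kb k hk w hst, scrKdot_eq_II kb k hk (w ∘ σ) hst]
      exact (IIdot_perm kb (t - s) σ w).symm
    · rw [scrK_eq_II kb k hk w hst, scrK_eq_II kb k hk (w ∘ σ) hst]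
      exact (IIK_perm kb (t - s) σ w).symm
end
end

section
/- Let T > 0, let 0 = t_0 < t_1 < ⋯ < t_J = T be a partition and let b_i^j (1 ≤ i, j ≤ J) be real numbers. Define the piecewise constant kernel k(t,s) := ∑_{i,j=1}^J b_i^j · 1_{[t_{i−1},t_i)}(s) · 1_{[t_{j−1},t_j)}(t) for 0 ≤ s ≤ t ≤ T. Then: (a) for all 1 ≤ i ≤ j ≤ J, all t_{i−1} ≤ s ≤ t ≤ t_i with s < t_i, all τ ∈ [t_{j−1}, t_j) with t ≤ τ, and all n ≥ 1: κ̇^{n,τ}_{s,t} = ((t−s)^{n−1}/(n−1)!) (b_i^i)^{n−1} b_i^j; (b) under the same assumptions (but allowing s = t_i), κ^{n,τ}_{s,t} = ((t−s)^n/n!) (b_i^i)^{n−1} b_i^j; (c) for all k ≥ 1, indices 1 ≤ i_1 < ⋯ < i_k ≤ J, integers n_1,…,n_k ≥ 1 and τ ∈ [t_{j−1}, t_j) with t_{i_k} ≤ τ, the weight μ^{n_1,…,n_k;τ}_{i_1,…,i_k} := ∫_{t_{i_1−1}}^{t_{i_1}} ⋯ ∫_{t_{i_k−1}}^{t_{i_k}}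 ∏_{l=1}^k κ̇^{n_l, r_{l+1}}_{r_l, t_{i_l}} dr_1⋯dr_k (with r_{k+1} := τ) factorizes as μ^{n_1,…,n_k;τ}_{i_1,…,i_k} = ∏_{l=1}^k ((t_{i_l} − t_{i_l−1})^{n_l}/n_l!) (b_{i_l}^{i_l})^{n_l−1} b_{i_l}^{c_l}, where c_l := i_{l+1} for l < k and c_k := j. -/
open MeasureTheory Matrix

noncomputable section

/-- `κ^{n,τ}_{s,t}` for the scalar kernel `k`. -/
def kap (k : ℝ → ℝ → ℝ) (n : ℕ) (s t τ : ℝ) : ℝ :=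
  ∫ r in volSimplex n s t, ∏ l : Fin n, k (nxt r τ l) (r l)

/-- `κ̇^{n+1,τ}_{s,t}` for the scalar kernel `k` (superscript `n + 1`). -/
def kapDot (k : ℝ → ℝ → ℝ) (n : ℕ) (s t τ : ℝ) : ℝ :=
  ∫ r in volSimplex n s t,
    ∏ l : Fin (n + 1), k (chain s τ r l.succ) (chain s τ r l.castSucc)

/-- The box `[t_{i₁-1},t_{i₁}] × ⋯ × [t_{i_k-1},t_{i_k}]`. -/
def blockBox (t : ℕ → ℝ) {k : ℕ} (i : Fin k → ℕ) : Set (Fin k → ℝ) :=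
  Set.univ.pi fun l => Set.Icc (t (i l - 1)) (t (i l))

/-- The scalar block weight `μ^{n₁+1,…,n_k+1}_{i₁,…,i_k}` with final time `τ`
(each superscript is `nn l + 1`). -/
def muW (ker : ℝ → ℝ → ℝ) (t : ℕ → ℝ) {k : ℕ} (i : Fin k → ℕ)
    (nn : Fin k → ℕ) (τ : ℝ) : ℝ :=
  ∫ r in blockBox t i, ∏ l, kapDot ker (nn l) (r l) (t (i l)) (nxt r τ l)

/-- The piecewise constant kernel `k(t,s) = ∑_{i,j} b_i^j 1_{[t_{i-1},t_i)}(s) 1_{[t_{j-1},t_j)}(t)`. -/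
def pcKer (t : ℕ → ℝ) (J : ℕ) (b : ℕ → ℕ → ℝ) : ℝ → ℝ → ℝ := fun tt ss =>
  ∑ i ∈ Finset.Icc 1 J, ∑ j ∈ Finset.Icc 1 J,
    b i j * Set.indicator (Set.Ico (t (i - 1)) (t i)) (fun _ => (1:ℝ)) ss
      * Set.indicator (Set.Ico (t (j - 1)) (t j)) (fun _ => (1:ℝ)) tt

section helpers

lemma isClosed_volSimplex (n : ℕ) (s t : ℝ) : IsClosed (volSimplex n s t) := by
  have : volSimplex n s t =
      (⋂ i, (fun r : Fin n → ℝ => r i) ⁻¹' Set.Icc s t) ∩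
      ⋂ (i) (j), {r : Fin n → ℝ | i ≤ j → r i ≤ r j} := by
    ext r; simp [volSimplex, Set.mem_iInter]
  rw [this]
  refine IsClosed.inter (isClosed_iInter fun i => isClosed_Icc.preimage (continuous_apply i)) ?_
  refine isClosed_iInter fun i => isClosed_iInter fun j => ?_
  by_cases h : i ≤ j
  · simp only [h, forall_true_left]
    exact isClosed_le (continuous_apply i) (continuous_apply j)
  · simp [h]

lemma volume_volSimplex (n : ℕ) : ∀ {s t : ℝ}, s ≤ t →
    volume (volSimplex n s t) = ENNReal.ofReal ((t - s) ^ n / n.factorial) := by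
  induction n with
  | zero =>
    intro s t _
    have h : volSimplex 0 s t = Set.univ :=
      Set.eq_univ_of_forall fun r => ⟨fun i => i.elim0, fun i => i.elim0⟩
    rw [h]
    simp [volume_pi, Measure.pi_univ]
  | succ n ih =>
    intro s t hst
    set e := MeasurableEquiv.piFinSuccAbove (fun _ : Fin (n + 1) => ℝ) (Fin.last n) with he
    have hmp : MeasurePreserving e.symm volume volume :=
      (volume_preserving_piFinSuccAbove (fun _ : Fin (n + 1) => ℝ) (Fin.last n)).symm
    have hS : MeasurableSet (volSimplex (n + 1) s t) := (isClosed_volSimplex _ _ _).measurableSet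
    have key : volume (volSimplex (n + 1) s t)
        = (volume : Measure (ℝ × (Fin n → ℝ))) (e.symm ⁻¹' volSimplex (n + 1) s t) :=
      (hmp.measure_preimage hS.nullMeasurableSet).symm
    have hTdesc : ∀ x (q : Fin n → ℝ),
        ((x, q) ∈ e.symm ⁻¹' volSimplex (n + 1) s t) ↔
          x ∈ Set.Icc s t ∧ q ∈ volSimplex n s x := by
      intro x q
      have hesymm : e.symm (x, q) = (Fin.last n).insertNth x q := rfl
      constructor
      · rintro ⟨h1, h2⟩
        rw [hesymm] at h1 h2
        refine ⟨by simpa using h1 (Fin.last n), fun j => ?_, fun a b hab => ?_⟩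
        · have h1' := h1 ((Fin.last n).succAbove j)
          rw [Fin.insertNth_apply_succAbove] at h1'
          have h2' := h2 ((Fin.last n).succAbove j) (Fin.last n) (Fin.le_last _)
          rw [Fin.insertNth_apply_succAbove, Fin.insertNth_apply_same] at h2'
          exact ⟨h1'.1, h2'⟩
        · have h2' := h2 ((Fin.last n).succAbove a) ((Fin.last n).succAbove b) ?_
          · rwa [Fin.insertNth_apply_succAbove, Fin.insertNth_apply_succAbove] at h2'
          · simpa [Fin.succAbove_last, Fin.castSucc_le_castSucc_iff] using hab
      · rintro ⟨hx, hq1, hq2⟩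
        rw [Set.mem_preimage, hesymm]
        constructor
        · intro m
          induction m using Fin.lastCases with
          | last => simpa using hx
          | cast j =>
            rw [← Fin.succAbove_last, Fin.insertNth_apply_succAbove]
            exact ⟨(hq1 j).1, le_trans (hq1 j).2 hx.2⟩
        · intro a b hab
          induction a using Fin.lastCases with
          | last =>
            induction b using Fin.lastCases with
            | last => exact le_refl _
            | cast j =>
              exfalso
              have := Fin.castSucc_lt_last j
              exact absurd (lt_of_le_of_lt hab this) (lt_irrefl _)
          | cast a' =>
            induction b using Fin.lastCases with
            | last =>
              rw [← Fin.succAbove_last, Fin.insertNth_apply_succAbove, Fin.insertNth_apply_same]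
              exact le_trans (hq1 a').2 (le_refl x)
            | cast b' =>
              rw [← Fin.succAbove_last, Fin.insertNth_apply_succAbove,
                Fin.insertNth_apply_succAbove]
              exact hq2 a' b' (by simpa [Fin.castSucc_le_castSucc_iff] using hab)
    have hT : MeasurableSet (e.symm ⁻¹' volSimplex (n + 1) s t) :=
      e.symm.measurable hS
    rw [key, Measure.volume_eq_prod, Measure.prod_apply hT]
    have hslice : ∀ x : ℝ, (volume (Prod.mk x ⁻¹' (e.symm ⁻¹' volSimplex (n + 1) s t)))
        = Set.indicator (Set.Icc s t) (fun x => volume (volSimplex n s x)) x := by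
      intro x
      by_cases hx : x ∈ Set.Icc s t
      · rw [Set.indicator_of_mem hx]
        congr 1
        ext q
        simp only [Set.mem_preimage, hTdesc x q, hx, true_and]
      · rw [Set.indicator_of_notMem hx]
        have : Prod.mk x ⁻¹' (e.symm ⁻¹' volSimplex (n + 1) s t) = ∅ := by
          ext q
          simp only [Set.mem_preimage, hTdesc x q, hx, false_and, Set.mem_empty_iff_false]
        simp [this]
    simp_rw [hslice]
    rw [lintegral_indicator measurableSet_Icc]
    have hcong : ∫⁻ x in Set.Icc s t, volume (volSimplex n s x)
        = ∫⁻ x in Set.Icc s t, ENNReal.ofReal ((x - s) ^ n / n.factorial) := by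
      refine setLIntegral_congr_fun measurableSet_Icc (fun x hx => ?_)
      exact ih hx.1
    rw [hcong]
    have hint : IntegrableOn (fun x : ℝ => (x - s) ^ n / n.factorial) (Set.Icc s t) := by
      apply Continuous.integrableOn_Icc
      continuity
    have hofReal : ∫⁻ x in Set.Icc s t, ENNReal.ofReal ((x - s) ^ n / n.factorial)
        = ENNReal.ofReal (∫ x in Set.Icc s t, (x - s) ^ n / n.factorial) := by
      rw [← ofReal_integral_eq_lintegral_ofReal hint]
      filter_upwards [ae_restrict_mem measurableSet_Icc] with x hx
      have : (0:ℝ) ≤ x - s := sub_nonneg.2 hx.1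
      positivity
    rw [hofReal]
    congr 1
    rw [MeasureTheory.integral_Icc_eq_integral_Ioc, ← intervalIntegral.integral_of_le hst,
      intervalIntegral.integral_div]
    have : ∫ x in s..t, (x - s) ^ n = (t - s) ^ (n + 1) / (n + 1) := by
      rw [intervalIntegral.integral_comp_sub_right (fun x => x ^ n) s]
      simp [integral_pow]
    rw [this]
    have h1 : ((n + 1).factorial : ℝ) = (n + 1) * n.factorial := by
      push_cast [Nat.factorial_succ]; ring
    rw [h1]
    have h2 : (n.factorial : ℝ) ≠ 0 := Nat.cast_ne_zero.2 (Nat.factorial_ne_zero n)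
    have h3 : ((n : ℝ) + 1) ≠ 0 := by positivity
    field_simp

variable {t : ℕ → ℝ} {J : ℕ}

lemma tmono' (hmono : ∀ a c : ℕ, a < c → c ≤ J → t a < t c) :
    ∀ a c : ℕ, a ≤ c → c ≤ J → t a ≤ t c := fun a c h hc =>
  h.lt_or_eq.elim (fun h' => (hmono a c h' hc).le) (fun h' => by rw [h'])

lemma Ico_notMem (hmono : ∀ a c : ℕ, a < c → c ≤ J → t a < t c) {a a' : ℕ}
    (ha1 : 1 ≤ a) (haJ : a ≤ J) (ha'1 : 1 ≤ a') (ha'J : a' ≤ J)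
    (hne : a' ≠ a) {x : ℝ} (hx : x ∈ Set.Ico (t (a - 1)) (t a)) :
    x ∉ Set.Ico (t (a' - 1)) (t (a')) := by
  intro hx'
  rcases lt_or_gt_of_ne hne with h | h
  · have h1 : t a' ≤ t (a - 1) := tmono' hmono a' (a-1) (by omega) (by omega)
    exact absurd (lt_of_le_of_lt (h1.trans hx.1) hx'.2) (lt_irrefl _)
  · have h1 : t a ≤ t (a' - 1) := tmono' hmono a (a'-1) (by omega) (by omega)
    exact absurd (lt_of_le_of_lt (h1.trans hx'.1) hx.2) (lt_irrefl _)

lemma pcKer_eval (hmono : ∀ a c : ℕ, a < c → c ≤ J → t a < t c) (b : ℕ → ℕ → ℝ)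
    {i j : ℕ} (hi1 : 1 ≤ i) (hiJ : i ≤ J) (hj1 : 1 ≤ j) (hjJ : j ≤ J) {ss tt : ℝ}
    (hss : ss ∈ Set.Ico (t (i - 1)) (t i)) (htt : tt ∈ Set.Ico (t (j - 1)) (t j)) :
    pcKer t J b tt ss = b i j := by
  unfold pcKer
  rw [Finset.sum_eq_single i]
  · rw [Finset.sum_eq_single j]
    · rw [Set.indicator_of_mem hss, Set.indicator_of_mem htt]; ring
    · intro j' hj' hne
      rw [Set.indicator_of_notMem (Ico_notMem hmono hj1 hjJ
        (Finset.mem_Icc.1 hj').1 (Finset.mem_Icc.1 hj').2 hne htt), mul_zero]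
    · intro h; exact absurd (Finset.mem_Icc.2 ⟨hj1, hjJ⟩) h
  · intro i' hi' hne
    refine Finset.sum_eq_zero fun j' _ => ?_
    rw [Set.indicator_of_notMem (Ico_notMem hmono hi1 hiJ
      (Finset.mem_Icc.1 hi').1 (Finset.mem_Icc.1 hi').2 hne hss), mul_zero, zero_mul]
  · intro h; exact absurd (Finset.mem_Icc.2 ⟨hi1, hiJ⟩) h

lemma volume_eval_eq_zero (n : ℕ) (l : Fin n) (c : ℝ) :
    volume {r : Fin n → ℝ | r l = c} = 0 := by
  classical
  have h : {r : Fin n → ℝ | r l = c}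
      = Set.univ.pi (fun m => if m = l then ({c} : Set ℝ) else Set.univ) := by
    ext r
    simp only [Set.mem_setOf_eq, Set.mem_pi, Set.mem_univ, forall_true_left]
    constructor
    · intro h m
      by_cases hm : m = l
      · subst hm; simp [h]
      · simp [hm]
    · intro h
      have := h l
      simpa using this
  rw [h, volume_pi_pi]
  refine Finset.prod_eq_zero (Finset.mem_univ l) ?_
  simp

lemma stmtA (hmono : ∀ a c : ℕ, a < c → c ≤ J → t a < t c) (b : ℕ → ℕ → ℝ)
    {i j : ℕ} (hi1 : 1 ≤ i) (hij : i ≤ j) (hjJ : j ≤ J)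
    {s t' τ : ℝ} (h1 : t (i - 1) ≤ s) (h2 : s ≤ t') (h3 : t' ≤ t i) (h4 : s < t i)
    (h5 : t' ≤ τ) (h6 : τ ∈ Set.Ico (t (j - 1)) (t j)) (n : ℕ) :
    kapDot (pcKer t J b) n s t' τ
      = (t' - s) ^ n / (Nat.factorial n : ℝ) * b i i ^ n * b i j := by
  have hiJ : i ≤ J := le_trans hij hjJ
  have hj1 : 1 ≤ j := le_trans hi1 hij
  have hS := (isClosed_volSimplex n s t').measurableSet
  have hN : volume (⋃ l : Fin n, {r : Fin n → ℝ | r l = t i}) = 0 :=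
    measure_iUnion_null fun l => volume_eval_eq_zero n l (t i)
  have hae : ∀ᵐ r : Fin n → ℝ, r ∉ ⋃ l, {r : Fin n → ℝ | r l = t i} :=
    (measure_eq_zero_iff_ae_notMem).1 hN
  have heq : kapDot (pcKer t J b) n s t' τ
      = ∫ r in volSimplex n s t', (b i i ^ n * b i j) := by
    refine setIntegral_congr_ae hS ?_
    filter_upwards [hae] with r hrN hrS
    have hr : ∀ l : Fin n, r l ∈ Set.Ico (t (i - 1)) (t i) := fun l =>
      ⟨le_trans h1 (hrS.1 l).1, lt_of_le_of_ne (le_trans (le_trans (hrS.1 l).2 h3) (le_refl _))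
        (fun hc => hrN (Set.mem_iUnion.2 ⟨l, hc⟩))⟩
    have hs' : s ∈ Set.Ico (t (i - 1)) (t i) := ⟨h1, h4⟩
    have hchain : ∀ m : Fin (n + 2), (m : ℕ) ≤ n →
        chain s τ r m ∈ Set.Ico (t (i - 1)) (t i) := by
      intro m hm
      unfold chain
      split_ifs with h0 hle
      all_goals first | exact hs' | exact hr _ | omega
    have hlastchain : chain s τ r (Fin.last n).succ = τ := by
      unfold chain
      rw [dif_neg (by simp), dif_neg (by simp)]
    rw [Fin.prod_univ_castSucc]
    have hmid : ∀ l : Fin n,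
        pcKer t J b (chain s τ r (Fin.castSucc l).succ)
          (chain s τ r (Fin.castSucc l).castSucc) = b i i := fun l =>
      pcKer_eval hmono b hi1 hiJ hi1 hiJ
        (hchain _ (by simp)) (hchain _ (by simp))
    have hlast : pcKer t J b (chain s τ r (Fin.last n).succ)
        (chain s τ r (Fin.last n).castSucc) = b i j := by
      rw [hlastchain]
      exact pcKer_eval hmono b hi1 hiJ hj1 hjJ (hchain _ (by simp)) h6
    rw [hlast]
    congr 1
    rw [Finset.prod_congr rfl fun l _ => hmid l]
    simp
  rw [heq, setIntegral_const, measureReal_def, volume_volSimplex n h2]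
  have h0 : (0:ℝ) ≤ t' - s := sub_nonneg.2 h2
  rw [ENNReal.toReal_ofReal (by positivity)]
  rw [smul_eq_mul]; ring

lemma stmtB (hmono : ∀ a c : ℕ, a < c → c ≤ J → t a < t c) (b : ℕ → ℕ → ℝ)
    {i j : ℕ} (hi1 : 1 ≤ i) (hij : i ≤ j) (hjJ : j ≤ J)
    {s t' τ : ℝ} (h1 : t (i - 1) ≤ s) (h2 : s ≤ t') (h3 : t' ≤ t i)
    (h5 : t' ≤ τ) (h6 : τ ∈ Set.Ico (t (j - 1)) (t j)) (n : ℕ) :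
    kap (pcKer t J b) (n + 1) s t' τ
      = (t' - s) ^ (n + 1) / (Nat.factorial (n + 1) : ℝ) * b i i ^ n * b i j := by
  have hiJ : i ≤ J := le_trans hij hjJ
  have hj1 : 1 ≤ j := le_trans hi1 hij
  have hS := (isClosed_volSimplex (n + 1) s t').measurableSet
  have hN : volume (⋃ l : Fin (n + 1), {r : Fin (n + 1) → ℝ | r l = t i}) = 0 :=
    measure_iUnion_null fun l => volume_eval_eq_zero (n + 1) l (t i)
  have hae : ∀ᵐ r : Fin (n + 1) → ℝ, r ∉ ⋃ l, {r : Fin (n + 1) → ℝ | r l = t i} :=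
    (measure_eq_zero_iff_ae_notMem).1 hN
  have heq : kap (pcKer t J b) (n + 1) s t' τ
      = ∫ r in volSimplex (n + 1) s t', (b i i ^ n * b i j) := by
    refine setIntegral_congr_ae hS ?_
    filter_upwards [hae] with r hrN hrS
    have hr : ∀ l : Fin (n + 1), r l ∈ Set.Ico (t (i - 1)) (t i) := fun l =>
      ⟨le_trans h1 (hrS.1 l).1, lt_of_le_of_ne (le_trans (hrS.1 l).2 h3)
        (fun hc => hrN (Set.mem_iUnion.2 ⟨l, hc⟩))⟩
    rw [Fin.prod_univ_castSucc]
    have hmid : ∀ l : Fin n,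
        pcKer t J b (nxt r τ (Fin.castSucc l)) (r (Fin.castSucc l)) = b i i := by
      intro l
      refine pcKer_eval hmono b hi1 hiJ hi1 hiJ (hr _) ?_
      unfold nxt
      split_ifs with h
      · exact hr _
      · exact (h (by simp)).elim
    have hlastnxt : nxt r τ (Fin.last n) = τ := by
      unfold nxt
      rw [dif_neg (by simp)]
    have hlast : pcKer t J b (nxt r τ (Fin.last n)) (r (Fin.last n)) = b i j := by
      rw [hlastnxt]
      exact pcKer_eval hmono b hi1 hiJ hj1 hjJ (hr _) h6
    rw [hlast]
    congr 1
    rw [Finset.prod_congr rfl fun l _ => hmid l]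
    simp
  rw [heq, setIntegral_const, measureReal_def, volume_volSimplex (n + 1) h2]
  have h0 : (0:ℝ) ≤ t' - s := sub_nonneg.2 h2
  rw [ENNReal.toReal_ofReal (by positivity)]
  rw [smul_eq_mul]; ring

lemma integral_Icc_pow_mul (a c : ℝ) (h : a ≤ c) (m : ℕ) (A : ℝ) :
    ∫ x in Set.Icc a c, ((c - x) ^ m / (m.factorial : ℝ) * A)
      = (c - a) ^ (m + 1) / ((m + 1).factorial : ℝ) * A := by
  rw [MeasureTheory.integral_Icc_eq_integral_Ioc, ← intervalIntegral.integral_of_le h]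
  have hshape : ∀ x : ℝ, (c - x) ^ m / (m.factorial : ℝ) * A
      = (c - x) ^ m * (A / m.factorial) := fun x => by ring
  simp_rw [hshape]
  rw [intervalIntegral.integral_mul_const]
  have hint : ∫ x in a..c, (c - x) ^ m = (c - a) ^ (m + 1) / (m + 1) := by
    rw [intervalIntegral.integral_comp_sub_left (fun x => x ^ m) c]
    simp [integral_pow]
  rw [hint]
  have h1 : ((m + 1).factorial : ℝ) = (m + 1) * m.factorial := by
    push_cast [Nat.factorial_succ]; ring
  rw [h1]
  have h2 : (m.factorial : ℝ) ≠ 0 := Nat.cast_ne_zero.2 (Nat.factorial_ne_zero m)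
  have h3 : ((m : ℝ) + 1) ≠ 0 := by positivity
  field_simp

lemma stmtC (hmono : ∀ a c : ℕ, a < c → c ≤ J → t a < t c) (b : ℕ → ℕ → ℝ)
    (K : ℕ) (i : Fin (K + 1) → ℕ) (hsm : StrictMono i) (hrange : ∀ l, 1 ≤ i l ∧ i l ≤ J)
    (nn : Fin (K + 1) → ℕ) (j : ℕ) (hj1 : 1 ≤ j) (hjJ : j ≤ J)
    (τ : ℝ) (hτ1 : t (i (Fin.last K)) ≤ τ) (hτ2 : τ ∈ Set.Ico (t (j - 1)) (t j)) :
    muW (pcKer t J b) t i nn τ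
      = ∏ l : Fin (K + 1),
          (t (i l) - t (i l - 1)) ^ (nn l + 1) / (Nat.factorial (nn l + 1) : ℝ)
            * b (i l) (i l) ^ (nn l)
            * b (i l) (if h : (l : ℕ) + 1 < K + 1 then i ⟨(l : ℕ) + 1, h⟩ else j) := by
  classical
  set c : Fin (K + 1) → ℕ :=
    fun l => if h : (l : ℕ) + 1 < K + 1 then i ⟨(l : ℕ) + 1, h⟩ else j with hc
  have hlastcase : ∀ l : Fin (K + 1), ¬((l : ℕ) + 1 < K + 1) → l = Fin.last K := by
    intro l h
    have h1 := l.isLt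
    have h2 : ((Fin.last K : Fin (K+1)) : ℕ) = K := Fin.val_last K
    exact Fin.ext (by omega)
  have hilej : i (Fin.last K) ≤ j := by
    by_contra hcon
    push_neg at hcon
    have h1 : t j ≤ t (i (Fin.last K)) :=
      tmono' hmono j (i (Fin.last K)) hcon.le (hrange _).2
    exact absurd (lt_of_le_of_lt (h1.trans hτ1) hτ2.2) (lt_irrefl _)
  have hcprop : ∀ l, i l ≤ c l ∧ 1 ≤ c l ∧ c l ≤ J := by
    intro l
    simp only [hc]
    by_cases h : (l : ℕ) + 1 < K + 1
    · rw [dif_pos h]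
      have hlt : l < (⟨(l : ℕ) + 1, h⟩ : Fin (K + 1)) := by
        rw [Fin.lt_def]; simp
      exact ⟨(hsm hlt).le, (hrange _).1, (hrange _).2⟩
    · rw [dif_neg h, hlastcase l h]
      exact ⟨hilej, hj1, hjJ⟩
  have hbox : MeasurableSet (blockBox t i) :=
    MeasurableSet.univ_pi fun l => measurableSet_Icc
  have hN : volume (⋃ l : Fin (K + 1), {r : Fin (K + 1) → ℝ | r l = t (i l)}) = 0 :=
    measure_iUnion_null fun l => volume_eval_eq_zero (K + 1) l (t (i l))
  have hae : ∀ᵐ r : Fin (K + 1) → ℝ, r ∉ ⋃ l, {r : Fin (K + 1) → ℝ | r l = t (i l)} :=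
    (measure_eq_zero_iff_ae_notMem).1 hN
  set g : Fin (K + 1) → ℝ → ℝ := fun l x =>
    (t (i l) - x) ^ (nn l) / ((nn l).factorial : ℝ)
      * (b (i l) (i l) ^ (nn l) * b (i l) (c l)) with hg
  have heq : muW (pcKer t J b) t i nn τ
      = ∫ r in blockBox t i, ∏ l, g l (r l) := by
    refine setIntegral_congr_ae hbox ?_
    filter_upwards [hae] with r hrM hrB
    have hrB' : ∀ l, r l ∈ Set.Icc (t (i l - 1)) (t (i l)) := fun l => hrB l (Set.mem_univ l)
    have hrlt : ∀ l, r l < t (i l) := fun l =>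
      lt_of_le_of_ne (hrB' l).2 (fun hcon => hrM (Set.mem_iUnion.2 ⟨l, hcon⟩))
    refine Finset.prod_congr rfl fun l _ => ?_
    have h5 : t (i l) ≤ nxt r τ l := by
      unfold nxt
      by_cases h : (l : ℕ) + 1 < K + 1
      · rw [dif_pos h]
        have hle1 : i l ≤ i (⟨(l : ℕ) + 1, h⟩ : Fin (K + 1)) - 1 := by
          have hlt : l < (⟨(l : ℕ) + 1, h⟩ : Fin (K + 1)) := by
            rw [Fin.lt_def]; simp
          have := hsm hlt
          omega
        exact le_trans (tmono' hmono _ _ hle1 (by have := (hrange (⟨(l : ℕ) + 1, h⟩ : Fin (K + 1))).2; omega))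
          (hrB' _).1
      · rw [dif_neg h, hlastcase l h]
        exact hτ1
    have h6 : nxt r τ l ∈ Set.Ico (t (c l - 1)) (t (c l)) := by
      unfold nxt
      simp only [hc]
      by_cases h : (l : ℕ) + 1 < K + 1
      · rw [dif_pos h, dif_pos h]
        exact ⟨(hrB' _).1, hrlt _⟩
      · rw [dif_neg h, dif_neg h]
        exact hτ2
    rw [stmtA hmono b (hrange l).1 (hcprop l).1 (hcprop l).2.2
      (hrB' l).1 (hrB' l).2 (le_refl _) (hrlt l) h5 h6 (nn l)]
    rw [hg]
    ring
  rw [heq, ← integral_indicator hbox]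
  have hsplit : Set.indicator (blockBox t i) (fun r => ∏ l, g l (r l))
      = fun r => ∏ l, (Set.Icc (t (i l - 1)) (t (i l))).indicator (g l) (r l) := by
    funext r
    by_cases hr : r ∈ blockBox t i
    · rw [Set.indicator_of_mem hr]
      exact Finset.prod_congr rfl fun l _ =>
        (Set.indicator_of_mem (hr l (Set.mem_univ l)) _).symm
    · rw [Set.indicator_of_notMem hr]
      have : ∃ l, r l ∉ Set.Icc (t (i l - 1)) (t (i l)) := by
        by_contra hcon
        push_neg at hcon
        exact hr fun l _ => hcon l
      obtain ⟨l, hl⟩ := this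
      exact (Finset.prod_eq_zero (Finset.mem_univ l)
        (Set.indicator_of_notMem hl _)).symm
  rw [hsplit]
  rw [MeasureTheory.integral_fintype_prod_volume_eq_prod
    (fun l x => (Set.Icc (t (i l - 1)) (t (i l))).indicator (g l) x)]
  refine Finset.prod_congr rfl fun l _ => ?_
  rw [integral_indicator measurableSet_Icc]
  have hle : t (i l - 1) ≤ t (i l) :=
    (hmono (i l - 1) (i l) (by have := (hrange l).1; omega) (hrange l).2).le
  simp only [hg]
  rw [integral_Icc_pow_mul _ _ hle (nn l) _]
  simp only [hc]
  ring

end helpers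

/-- Piecewise constant kernels: closed forms for `κ̇` (superscript `n + 1`),
`κ` (superscript `n + 1`), and exact factorization of the block weights `μ` (superscripts
`nn l + 1`). -/
theorem stmt9 {T : ℝ} (hT : 0 < T) (J : ℕ) (hJ : 1 ≤ J) (t : ℕ → ℝ)
    (ht0 : t 0 = 0) (htJ : t J = T) (hmono : ∀ a c : ℕ, a < c → c ≤ J → t a < t c)
    (b : ℕ → ℕ → ℝ) :
    (∀ i j : ℕ, 1 ≤ i → i ≤ j → j ≤ J →
      ∀ s t' τ : ℝ, t (i - 1) ≤ s → s ≤ t' → t' ≤ t i → s < t i →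
        t' ≤ τ → τ ∈ Set.Ico (t (j - 1)) (t j) → ∀ n : ℕ,
      kapDot (pcKer t J b) n s t' τ
        = (t' - s) ^ n / (Nat.factorial n : ℝ) * b i i ^ n * b i j) ∧
    (∀ i j : ℕ, 1 ≤ i → i ≤ j → j ≤ J →
      ∀ s t' τ : ℝ, t (i - 1) ≤ s → s ≤ t' → t' ≤ t i →
        t' ≤ τ → τ ∈ Set.Ico (t (j - 1)) (t j) → ∀ n : ℕ,
      kap (pcKer t J b) (n + 1) s t' τ
        = (t' - s) ^ (n + 1) / (Nat.factorial (n + 1) : ℝ) * b i i ^ n * b i j) ∧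
    (∀ (K : ℕ) (i : Fin (K + 1) → ℕ), StrictMono i → (∀ l, 1 ≤ i l ∧ i l ≤ J) →
      ∀ (nn : Fin (K + 1) → ℕ) (j : ℕ), 1 ≤ j → j ≤ J →
      ∀ τ : ℝ, t (i (Fin.last K)) ≤ τ → τ ∈ Set.Ico (t (j - 1)) (t j) →
      muW (pcKer t J b) t i nn τ
        = ∏ l : Fin (K + 1),
            (t (i l) - t (i l - 1)) ^ (nn l + 1) / (Nat.factorial (nn l + 1) : ℝ)
              * b (i l) (i l) ^ (nn l)
              * b (i l) (if h : (l : ℕ) + 1 < K + 1 then i ⟨(l : ℕ) + 1, h⟩ else j)) := by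
  refine ⟨?_, ?_, ?_⟩
  · intro i j hi1 hij hjJ s t' τ h1 h2 h3 h4 h5 h6 n
    exact stmtA hmono b hi1 hij hjJ h1 h2 h3 h4 h5 h6 n
  · intro i j hi1 hij hjJ s t' τ h1 h2 h3 h5 h6 n
    exact stmtB hmono b hi1 hij hjJ h1 h2 h3 h5 h6 n
  · intro K i hsm hrange nn j hj1 hjJ τ hτ1 hτ2
    exact stmtC hmono b K i hsm hrange nn j hj1 hjJ τ hτ1 hτ2
end
end
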